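/- Assume hypotheses (H): n ≥ 4 is an integer, δ and δ′ are reals with 0 < δ′ < δ < 1/2 and 1/2 − δ′ < 1 − 2δ, λ is a real with 1/2 − δ′ ≤ λ ≤ 1 − 2δ, α is a real with n − 1 − λ/8 < λα < n − 1, and ā ∈ (0,1]. If in addition (ā(2−ā)/2)^{δ′+1/2} ≥ 1/2, then D₃ ≤ 0 and E₁ + D₃ ≥ 0. -/
import Mathlib


noncomputable section

def Xc (A δ : ℝ) : ℝ := (A * (2 - A) / 2) ^ (δ + 1 / 2)
def Yc (A δ : ℝ) : ℝ := (A * (2 - A) / 2) ^ (δ - 1 / 2)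
def C1 (A δ α : ℝ) : ℝ :=
  (1 - A) ^ 2 / (2 - A) * Yc A δ + (1 - A) / (2 - A) ^ 2
    + α / (2 - A) ^ 2 * Xc A δ + α * A / (2 - A) ^ 2 * (1 / 2 - Xc A δ)
def C2 (A δ α : ℝ) : ℝ := α * A * (1 - A) * (1 - Xc A δ) - A * (1 - A)
def C3 (A δ α : ℝ) : ℝ :=
  α * A / 2 + (1 - A) ^ 2 / (2 - A) + (α - 2) * (1 - A) ^ 2 / (2 - A) * Xc A δ
def D1 (A δ : ℝ) : ℝ :=
  (1 / 2 - δ) * ((1 - A) ^ 2 / (2 - A)) * Yc A δ - A / (2 * (2 - A) ^ 2) + Xc A δ / (2 - A)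
def D2 (A : ℝ) : ℝ := -(A * (1 - A))
def D3 (n : ℕ) (A δ : ℝ) : ℝ := ((n : ℝ) - 1) / (2 - A) * (1 / 2 - Xc A δ)
def D4 (n : ℕ) (A δ : ℝ) : ℝ :=
  (1 + 2 * δ) * ((1 - A) ^ 2 / (2 - A)) * Xc A δ + ((n : ℝ) - 2) * A * (1 / 2 - Xc A δ)
def D5 (n : ℕ) (A δ : ℝ) : ℝ :=
  (1 + 2 * δ) * ((1 - A) ^ 2 / (2 - A)) * Xc A δ + (n : ℝ) * A * (1 / 2 - Xc A δ)

lemma aux_hG (A X : ℝ) (h9 : 0 < A) (h10 : A ≤ 1) (hX0 : 0 ≤ X)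
    (hXsq : X ^ 2 ≤ A * (2 - A) / 2) : (41 - 8*A) * X ≤ 24 + 4*A := by
  have hpoly : (41 - 8*A)^2 * (A * (2 - A) / 2) ≤ (24 + 4*A)^2 := by
    nlinarith [mul_nonneg h9.le (by linarith : (0:ℝ) ≤ 1 - A), sq_nonneg (A - 2/3),
      sq_nonneg (A*(1-A)), mul_nonneg (mul_nonneg h9.le h9.le) (by linarith : (0:ℝ) ≤ 1 - A)]
  have hq : ((41 - 8*A) * X) ^ 2 ≤ (41 - 8*A)^2 * (A * (2 - A) / 2) := by
    have := mul_le_mul_of_nonneg_left hXsq (sq_nonneg (41 - 8*A))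
    nlinarith [this]
  nlinarith [hq, hpoly, mul_nonneg hX0 (by linarith : (0:ℝ) ≤ 41 - 8*A)]

lemma aux_t4 (nn lam A X : ℝ) (hn4 : 4 ≤ nn) (hlam0 : 0 < lam) (hlam1 : lam ≤ 1)
    (h9 : 0 < A) (h10 : A ≤ 1) (hX0 : 0 ≤ X) (hX1 : X ≤ 1)
    (hXsq : X ^ 2 ≤ A * (2 - A) / 2) :
    0 ≤ (nn - 1 - lam/8) * X + (nn - 1) * A * (1/2 - X)
      + lam * (1 - A) + A / 2 - (2 - A) * X + (nn - 1) * (2 - A) * (1/2 - X) := by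
  have hG := aux_hG A X h9 h10 hX0 hXsq
  have hmono : 3 * (1 - X) ≤ (nn - 1) * (1 - X) :=
    mul_le_mul_of_nonneg_right (by linarith) (by linarith)
  have hlx : lam * X ≤ X := mul_le_of_le_one_left hX0 hlam1
  have hlA : 0 ≤ lam * (1 - A) := mul_nonneg hlam0.le (by linarith)
  nlinarith [hG, hmono, hlx, hlA]

set_option maxHeartbeats 1000000 in
theorem stmt10 (n : ℕ) (hn : 4 ≤ n) (δ δ' lam α A : ℝ)
    (h1 : 0 < δ') (h2 : δ' < δ) (h3 : δ < 1 / 2)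
    (h4 : 1 / 2 - δ' < 1 - 2 * δ)
    (h5 : 1 / 2 - δ' ≤ lam) (h6 : lam ≤ 1 - 2 * δ)
    (h7 : (n : ℝ) - 1 - lam / 8 < lam * α) (h8 : lam * α < (n : ℝ) - 1)
    (h9 : 0 < A) (h10 : A ≤ 1) (hX : (1 : ℝ) / 2 ≤ Xc A δ') :
    D3 n A δ' ≤ 0 ∧
    0 ≤ (lam * C1 A δ' α - D1 A δ') + D3 n A δ' := by
  have hA2 : (0:ℝ) < 2 - A := by linarith
  have hn4 : (4:ℝ) ≤ (n:ℝ) := by exact_mod_cast hn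
  have hu0 : 0 < A * (2 - A) / 2 := by positivity
  have hu1 : A * (2 - A) / 2 ≤ 1 / 2 := by nlinarith [sq_nonneg (1 - A)]
  have hX0 : 0 ≤ Xc A δ' := Real.rpow_nonneg hu0.le _
  have hY0 : 0 ≤ Yc A δ' := Real.rpow_nonneg hu0.le _
  have hXsq : Xc A δ' ^ 2 ≤ A * (2 - A) / 2 := by
    have h1' : Xc A δ' ≤ (A * (2 - A) / 2) ^ ((1:ℝ)/2) :=
      Real.rpow_le_rpow_of_exponent_ge hu0 (by linarith) (by linarith)
    have h2' : ((A * (2 - A) / 2) ^ ((1:ℝ)/2)) ^ 2 = A * (2 - A) / 2 := by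
      rw [← Real.rpow_natCast _ 2, ← Real.rpow_mul hu0.le]
      norm_num
    calc Xc A δ' ^ 2 ≤ ((A * (2 - A) / 2) ^ ((1:ℝ)/2)) ^ 2 := by
          apply pow_le_pow_left₀ hX0 h1'
      _ = A * (2 - A) / 2 := h2'
  have hX1 : Xc A δ' ≤ 1 := by nlinarith [sq_nonneg (Xc A δ' - 1)]
  have hlam0 : 0 < lam := by linarith
  have hlam1 : lam ≤ 1 := by linarith
  constructor
  · apply mul_nonpos_of_nonneg_of_nonpos
    · apply div_nonneg (by linarith) hA2.le
    · linarith
  · have key : 0 ≤ ((lam * C1 A δ' α - D1 A δ') + D3 n A δ') * (2 - A) ^ 2 := by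
      have hexp : ((lam * C1 A δ' α - D1 A δ') + D3 n A δ') * (2 - A) ^ 2 =
          (lam - (1/2 - δ')) * ((1 - A) ^ 2 * (2 - A) * Yc A δ')
          + lam * (1 - A) + lam * α * Xc A δ' + lam * α * A * (1/2 - Xc A δ')
          + A / 2 - (2 - A) * Xc A δ' + ((n:ℝ) - 1) * (2 - A) * (1/2 - Xc A δ') := by
        unfold C1 D1 D3
        field_simp
        ring
      rw [hexp]
      have t1 : 0 ≤ (lam - (1/2 - δ')) * ((1 - A) ^ 2 * (2 - A) * Yc A δ') :=
        mul_nonneg (by linarith) (mul_nonneg (mul_nonneg (sq_nonneg _) hA2.le) hY0)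
      have t2 : ((n:ℝ) - 1) * (1/2 - Xc A δ') ≤ lam * α * (1/2 - Xc A δ') :=
        mul_le_mul_of_nonpos_right h8.le (by linarith)
      have t2' : ((n:ℝ) - 1) * A * (1/2 - Xc A δ') ≤ lam * α * A * (1/2 - Xc A δ') := by
        nlinarith [mul_le_mul_of_nonneg_left t2 h9.le]
      have t3 : ((n:ℝ) - 1 - lam/8) * Xc A δ' ≤ lam * α * Xc A δ' :=
        mul_le_mul_of_nonneg_right h7.le hX0
      have t4 := aux_t4 (n:ℝ) lam A (Xc A δ') hn4 hlam0 hlam1 h9 h10 hX0 hX1 hXsq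
      linarith [t1, t2', t3, t4]
    have hpos : (0:ℝ) < (2 - A) ^ 2 := by positivity
    exact (mul_nonneg_iff_of_pos_right hpos).mp key
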